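/- Let G be a finite simple graph and let u be a vertex of G. Then the Grundy domination number of the graph G - u obtained by deleting u (the induced subgraph on V(G) \ {u}) satisfies γ_gr(G - u) ≤ γ_gr(G). -/

import Mathlib

/-!
Every legal sequence of a finite graph extends greedily to a legal dominating one: while some
vertex `w` is undominated, appending `w` itself is legal, with `w` as footprint. A legal sequence
of `G - u` stays legal in `G`, because closed neighbourhoods in an induced subgraph are the traces
of those in `G`. Hence every legal dominating sequence of `G - u` is no longer than some legal
dominating sequence of `G`.
-/

/-- The closed neighborhood `N[v] = {v} ∪ N(v)` of a vertex. -/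
def closedNbhd {V : Type*} (G : SimpleGraph V) (v : V) : Set V :=
  insert v (G.neighborSet v)

/-- A sequence (list) of pairwise distinct vertices is legal if each vertex
footprints some vertex not dominated by the previous ones. -/
def IsLegalSeq {V : Type*} (G : SimpleGraph V) (l : List V) : Prop :=
  l.Nodup ∧ ∀ i : Fin l.length, ∃ u,
    u ∈ closedNbhd G (l.get i) ∧
    ∀ j : Fin l.length, (j : ℕ) < (i : ℕ) → u ∉ closedNbhd G (l.get j)

/-- A legal dominating sequence. -/
def IsDomSeq {V : Type*} (G : SimpleGraph V) (l : List V) : Prop :=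
  IsLegalSeq G l ∧ ∀ u : V, ∃ v ∈ l, u ∈ closedNbhd G v

/-- The Grundy domination number: the maximum length of a legal dominating sequence. -/
noncomputable def grundyDomNum {V : Type*} (G : SimpleGraph V) : ℕ :=
  sSup {k : ℕ | ∃ l : List V, IsDomSeq G l ∧ l.length = k}

section

variable {V W : Type*} {G : SimpleGraph V} {H : SimpleGraph W}

lemma self_mem_closedNbhd (G : SimpleGraph V) (v : V) : v ∈ closedNbhd G v :=
  Set.mem_insert v _

lemma SimpleGraph.Embedding.map_mem_closedNbhd_iff (f : H ↪g G) {v w : W} :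
    f w ∈ closedNbhd G (f v) ↔ w ∈ closedNbhd H v := by
  simp [closedNbhd, f.injective.eq_iff]

namespace IsLegalSeq

lemma map (f : H ↪g G) {l : List W} (hl : IsLegalSeq H l) : IsLegalSeq G (l.map f) := by
  obtain ⟨hnd, hfoot⟩ := hl
  refine ⟨hnd.map f.injective, fun i => ?_⟩
  obtain ⟨w, hw, hnew⟩ := hfoot ⟨i, by simpa using i.2⟩
  refine ⟨f w, by simpa [f.map_mem_closedNbhd_iff] using hw, fun j hj hmem => ?_⟩
  exact hnew ⟨j, by simpa using j.2⟩ hj (by simpa [f.map_mem_closedNbhd_iff] using hmem)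

lemma append_singleton {l : List V} {v : V} (hl : IsLegalSeq G l)
    (hv : ∃ w ∈ closedNbhd G v, ∀ x ∈ l, w ∉ closedNbhd G x) : IsLegalSeq G (l ++ [v]) := by
  obtain ⟨hnd, hfoot⟩ := hl
  obtain ⟨w, hwv, hwl⟩ := hv
  have hvl : v ∉ l := fun h => hwl v h hwv
  refine ⟨by simpa using hnd.concat hvl, fun i => ?_⟩
  have get_left (j : Fin (l ++ [v]).length) (hj : (j : ℕ) < l.length) :
      (l ++ [v]).get j = l.get ⟨j, hj⟩ := by
    simp [List.getElem_append_left hj]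
  rcases (Nat.lt_succ_iff.mp (by simpa using i.2)).lt_or_eq with hi | hi
  · obtain ⟨u, hu, hnew⟩ := hfoot ⟨i, hi⟩
    refine ⟨u, by rwa [get_left i hi], fun j hj => ?_⟩
    rw [get_left j (hj.trans hi)]
    exact hnew _ hj
  · have hget : (l ++ [v]).get i = v := by simp [hi]
    refine ⟨w, by rwa [hget], fun j hj => ?_⟩
    rw [get_left j (hi ▸ hj)]
    exact hwl _ (List.get_mem _ _)

variable [Fintype V]

lemma length_le_card {l : List V} (hl : IsLegalSeq G l) : l.length ≤ Fintype.card V :=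
  hl.1.length_le_card

lemma exists_append_isDomSeq {l : List V} (hl : IsLegalSeq G l) :
    ∃ l' : List V, IsDomSeq G (l ++ l') := by
  by_cases hdom : ∀ u : V, ∃ v ∈ l, u ∈ closedNbhd G v
  · exact ⟨[], by simpa using ⟨hl, hdom⟩⟩
  · push Not at hdom
    obtain ⟨w, hw⟩ := hdom
    have hlw : IsLegalSeq G (l ++ [w]) := hl.append_singleton ⟨w, self_mem_closedNbhd G w, hw⟩
    obtain ⟨l', hl'⟩ := hlw.exists_append_isDomSeq
    exact ⟨w :: l', by simpa using hl'⟩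
termination_by Fintype.card V - l.length
decreasing_by
  have := (hl.append_singleton ⟨w, self_mem_closedNbhd G w, hw⟩).length_le_card
  simp only [List.length_append, List.length_singleton] at this ⊢
  omega

lemma length_le_grundyDomNum {l : List V} (hl : IsLegalSeq G l) :
    l.length ≤ grundyDomNum G := by
  obtain ⟨l', hl'⟩ := hl.exists_append_isDomSeq
  have hbdd : BddAbove {k : ℕ | ∃ l : List V, IsDomSeq G l ∧ l.length = k} :=
    ⟨Fintype.card V, by rintro k ⟨l, hl, rfl⟩; exact hl.1.length_le_card⟩
  calc l.length ≤ (l ++ l').length := by simp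
    _ ≤ grundyDomNum G := le_csSup hbdd ⟨_, hl', rfl⟩

end IsLegalSeq

end

theorem grundy_vertex_deletion_upper {V : Type*} [Fintype V] (G : SimpleGraph V)
    (u : V) :
    grundyDomNum (G.induce {v : V | v ≠ u}) ≤ grundyDomNum G := by
  apply csSup_le'
  rintro k ⟨l, hl, rfl⟩
  simpa using (hl.1.map (SimpleGraph.Embedding.induce _)).length_le_grundyDomNum
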